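/- arXiv:1508.05181 — 6 statements merged into one kernel-verified Lean document; each statement's English description precedes it below -/
import Mathlib

section
/- For real numbers g > h ≥ 0 and b > 0, one has log((1+g·b)/(1+h·b)) > (1/2)·log((1+2g·b)/(1+2h·b)). (In the notation of Example 1 of the paper: c(b_max, g₁, h₁) > 0.5·c(2·b_max, g₁, h₁), so transmitting power b in every slot is strictly better than transmitting power 2b in every other slot.) -/
/-- For `g > h ≥ 0` and `b > 0`,
`log((1+g·b)/(1+h·b)) > (1/2)·log((1+2g·b)/(1+2h·b))`; i.e., in Example 1,
`c(b_max, g₁, h₁) > 0.5·c(2·b_max, g₁, h₁)`. -/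
theorem strict_concavity_example (g h b : ℝ) (hh : 0 ≤ h) (hhg : h < g) (hb : 0 < b) :
    Real.log ((1 + g * b) / (1 + h * b))
      > (1 / 2) * Real.log ((1 + 2 * g * b) / (1 + 2 * h * b)) := by
  have hg : 0 < g := hh.trans_lt hhg
  have h1 : (0:ℝ) < 1 + h * b := by positivity
  have h2 : (0:ℝ) < 1 + g * b := by positivity
  have h3 : (0:ℝ) < 1 + 2 * h * b := by positivity
  have h4 : (0:ℝ) < 1 + 2 * g * b := by positivity
  have hB : (0:ℝ) < (1 + 2 * g * b) / (1 + 2 * h * b) := by positivity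
  have key : (1 + 2 * g * b) / (1 + 2 * h * b)
      < ((1 + g * b) / (1 + h * b)) ^ 2 := by
    rw [div_pow, div_lt_div_iff₀ h3 (by positivity)]
    have hd : 0 < (g * b - h * b) * (g * b + h * b + 2 * (g * b) * (h * b)) := by
      apply mul_pos
      · nlinarith
      · positivity
    nlinarith [hd]
  have := Real.log_lt_log hB key
  rw [Real.log_pow] at this
  linarith
end

section
/- Let 0 ≤ g' ≤ g'' and h ≥ 0 be real numbers. Then the function ρ ↦ max(0, log((1+g''ρ)/(1+hρ))) − max(0, log((1+g'ρ)/(1+hρ))) is monotone nondecreasing on [0, ∞). (This is the sign condition D ≥ 0 of Proposition 3 verified in Appendix F, which yields the first part of Theorem 3: the optimal transmission power is nondecreasing in the legitimate channel gain.) -/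
private lemma plus_log_eq (g h ρ : ℝ) (hg : 0 ≤ g) (hh : 0 ≤ h) (hρ : 0 ≤ ρ) :
    max 0 (Real.log ((1 + g * ρ) / (1 + h * ρ)))
      = Real.log (1 + max g h * ρ) - Real.log (1 + h * ρ) := by
  have hgp : (0:ℝ) < 1 + g * ρ := by positivity
  have hhp : (0:ℝ) < 1 + h * ρ := by positivity
  rw [Real.log_div (ne_of_gt hgp) (ne_of_gt hhp)]
  rcases le_total h g with hle | hle
  · rw [max_eq_left hle, max_eq_right]
    have : Real.log (1 + h * ρ) ≤ Real.log (1 + g * ρ) :=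
      Real.log_le_log hhp (by nlinarith)
    linarith
  · rw [max_eq_right hle, max_eq_left]
    simp
    have : Real.log (1 + g * ρ) ≤ Real.log (1 + h * ρ) :=
      Real.log_le_log hgp (by nlinarith)
    linarith

/-- For `0 ≤ g' ≤ g''` and `h ≥ 0`, the function
`ρ ↦ [log((1+g''ρ)/(1+hρ))]⁺ − [log((1+g'ρ)/(1+hρ))]⁺` is monotone nondecreasing
on `[0, ∞)` (the sign condition `D ≥ 0` of Proposition 3 / Appendix F). -/
theorem D_nonneg_in_legitimate_gain (g' g'' h : ℝ)
    (hg' : 0 ≤ g') (hgg : g' ≤ g'') (hh : 0 ≤ h) :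
    MonotoneOn
      (fun ρ => max 0 (Real.log ((1 + g'' * ρ) / (1 + h * ρ)))
              - max 0 (Real.log ((1 + g' * ρ) / (1 + h * ρ))))
      (Set.Ici (0 : ℝ)) := by
  intro a ha b hb hab
  simp only [Set.mem_Ici] at ha hb
  have hg'' : 0 ≤ g'' := le_trans hg' hgg
  dsimp only
  rw [plus_log_eq g'' h a hg'' hh ha, plus_log_eq g' h a hg' hh ha,
      plus_log_eq g'' h b hg'' hh hb, plus_log_eq g' h b hg' hh hb]
  set G' := max g' h with hG'
  set G'' := max g'' h with hG''
  have hG'0 : 0 ≤ G' := le_trans hg' (le_max_left _ _)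
  have hG''0 : 0 ≤ G'' := le_trans hg'' (le_max_left _ _)
  have hGG : G' ≤ G'' := max_le_max hgg le_rfl
  have h1 : (0:ℝ) < 1 + G'' * a := by positivity
  have h2 : (0:ℝ) < 1 + G' * a := by positivity
  have h3 : (0:ℝ) < 1 + G'' * b := by positivity
  have h4 : (0:ℝ) < 1 + G' * b := by positivity
  have key : Real.log ((1 + G'' * a) * (1 + G' * b))
      ≤ Real.log ((1 + G'' * b) * (1 + G' * a)) :=
    Real.log_le_log (by positivity) (by nlinarith)
  rw [Real.log_mul (ne_of_gt h1) (ne_of_gt h4),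
      Real.log_mul (ne_of_gt h3) (ne_of_gt h2)] at key
  linarith
end

section
/- Let g > h > 0 and let η be a real number with 0 < η < g − h. Define α = 1/h − 1/g, β = 1/h + 1/g, and ρ* = sqrt(α²/4 + α/η) − β/2. Then ρ* > 0 and g/(1+g·ρ*) − h/(1+h·ρ*) = η; i.e., ρ* satisfies the Lagrangian stationarity condition for the optimal power splitting problem, the derivative with respect to ρ of log(1+gρ) − log(1+hρ) evaluated at ρ* equals η. -/
/-!
With `α = 1/h - 1/g` and `β = 1/h + 1/g`, the point `ρ* = s - β/2`, `s² = α²/4 + α/η`, is the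
positive root of `ρ² + βρ = α/η - 1/(gh)`. Since `gh·β = g + h` and `gh·α = g - h`, this says
`(1 + gρ*)(1 + hρ*) = (g - h)/η`, while `g/(1 + gρ) - h/(1 + hρ) = (g - h)/((1 + gρ)(1 + hρ))`.
The root is positive exactly when `s² > β²/4`, i.e. `α/η > 1/(gh)`, i.e. `η < g - h`.
-/

open Real

/-- The paper's `ρ*` before truncation at `0`. -/
noncomputable def optimalSplit (g h η : ℝ) : ℝ :=
  √((1 / h - 1 / g) ^ 2 / 4 + (1 / h - 1 / g) / η) - (1 / h + 1 / g) / 2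

theorem one_add_mul_mul_one_add_mul_eq_of_sq {g h η ρ : ℝ} (hg : g ≠ 0) (hh : h ≠ 0)
    (hη : η ≠ 0)
    (hρ : (ρ + (1 / h + 1 / g) / 2) ^ 2 = (1 / h - 1 / g) ^ 2 / 4 + (1 / h - 1 / g) / η) :
    (1 + g * ρ) * (1 + h * ρ) = (g - h) / η := by
  field_simp at hρ
  rw [eq_div_iff hη]
  refine mul_left_cancel₀ (mul_ne_zero hg hh) ?_
  linear_combination hρ / 16

theorem div_one_add_mul_sub_div_one_add_mul {g h ρ : ℝ} (hg : 1 + g * ρ ≠ 0)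
    (hh : 1 + h * ρ ≠ 0) :
    g / (1 + g * ρ) - h / (1 + h * ρ) = (g - h) / ((1 + g * ρ) * (1 + h * ρ)) := by
  rw [div_sub_div _ _ hg hh]
  ring

theorem optimalSplit_pos {g h η : ℝ} (hh : 0 < h) (hhg : h < g) (hη : 0 < η)
    (hηg : η < g - h) : 0 < optimalSplit g h η := by
  have hg : 0 < g := hh.trans hhg
  have hgap : (1 / h + 1 / g) ^ 2 / 4 - (1 / h - 1 / g) ^ 2 / 4 = 1 / (g * h) := by
    field_simp; ring
  have hα : 1 / (g * h) < (1 / h - 1 / g) / η := by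
    rw [div_lt_div_iff₀ (by positivity) hη]
    field_simp
    linarith
  rw [optimalSplit, sub_pos, lt_sqrt (by positivity)]
  linarith

theorem optimalSplit_stationary {g h η : ℝ} (hh : 0 < h) (hhg : h < g) (hη : 0 < η) :
    g / (1 + g * optimalSplit g h η) - h / (1 + h * optimalSplit g h η) = η := by
  have hg : 0 < g := hh.trans hhg
  have hrad : 0 ≤ (1 / h - 1 / g) ^ 2 / 4 + (1 / h - 1 / g) / η := by
    have : 1 / g < 1 / h := one_div_lt_one_div_of_lt hh hhg
    have : 0 < 1 / h - 1 / g := by linarith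
    positivity
  have hprod := one_add_mul_mul_one_add_mul_eq_of_sq hg.ne' hh.ne' hη.ne'
    (ρ := optimalSplit g h η) (by rw [optimalSplit, sub_add_cancel, sq_sqrt hrad])
  have hne : (1 + g * optimalSplit g h η) * (1 + h * optimalSplit g h η) ≠ 0 := by
    rw [hprod]; exact div_ne_zero (sub_pos.2 hhg).ne' hη.ne'
  rw [div_one_add_mul_sub_div_one_add_mul (left_ne_zero_of_mul hne)
    (right_ne_zero_of_mul hne), hprod, div_div_cancel₀ (sub_pos.2 hhg).ne']

/-- For `g > h > 0` and `0 < η < g − h`, with `α = 1/h − 1/g`,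
`β = 1/h + 1/g`, `ρ* = sqrt(α²/4 + α/η) − β/2`, one has `ρ* > 0` and
`g/(1+g·ρ*) − h/(1+h·ρ*) = η` (the Lagrangian stationarity condition,
eqs. (21)–(22) of the paper). -/
theorem optimal_power_splitting_stationarity (g h η : ℝ)
    (hh : 0 < h) (hhg : h < g) (hη0 : 0 < η) (hη1 : η < g - h) :
    0 < Real.sqrt ((1 / h - 1 / g) ^ 2 / 4 + (1 / h - 1 / g) / η) - (1 / h + 1 / g) / 2
    ∧ (let ρs := Real.sqrt ((1 / h - 1 / g) ^ 2 / 4 + (1 / h - 1 / g) / η)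
                 - (1 / h + 1 / g) / 2
       g / (1 + g * ρs) - h / (1 + h * ρs) = η) :=
  ⟨optimalSplit_pos hh hhg hη0 hη1, optimalSplit_stationary hh hhg hη0⟩
end

section
/- Let N ≥ 1 and let g = (g₁,…,g_N) and h = (h₁,…,h_N) be vectors of nonnegative reals. Then the multi-carrier variable-rate secrecy objective ρ ↦ Σ_{r=1}^N ( log(1+g_r·ρ_r) − log(1+min(g_r,h_r)·ρ_r) ) is concave on the nonnegative orthant {ρ ∈ ℝ^N : ρ_r ≥ 0 for all r}. -/
/-!
Each summand depends on a single coordinate, so it suffices that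
`x ↦ log (1 + a x) - log (1 + b x)` is concave on `[0, ∞)` for `0 ≤ b ≤ a`. Its second
derivative is `(b / (1 + b x))² - (a / (1 + a x))² ≤ 0`, since `t ↦ t / (1 + t x)` is
increasing for `x ≥ 0`.
-/

open Set Real

section ConcaveSum

variable {𝕜 E β ι : Type*} [Semiring 𝕜] [PartialOrder 𝕜] [AddCommMonoid E] [SMul 𝕜 E]
  [AddCommMonoid β] [PartialOrder β] [IsOrderedAddMonoid β] [Module 𝕜 β] {s : Set E}

theorem concaveOn_finset_sum {t : Finset ι} {f : ι → E → β} (hs : Convex 𝕜 s)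
    (hf : ∀ i ∈ t, ConcaveOn 𝕜 s (f i)) : ConcaveOn 𝕜 s fun x => ∑ i ∈ t, f i x := by
  simpa only [← Finset.sum_apply] using
    Finset.sum_induction f (ConcaveOn 𝕜 s) (fun _ _ => ConcaveOn.add) (concaveOn_const 0 hs) hf

end ConcaveSum

theorem concaveOn_univ_pi_sum {ι : Type*} [Fintype ι] {s : ι → Set ℝ} {f : ι → ℝ → ℝ}
    (hf : ∀ i, ConcaveOn ℝ (s i) (f i)) :
    ConcaveOn ℝ (univ.pi s) fun x => ∑ i, f i (x i) :=
  have hs : Convex ℝ (univ.pi s) := convex_pi fun i _ => (hf i).1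
  concaveOn_finset_sum hs fun i _ =>
    ((hf i).comp_linearMap (LinearMap.proj (R := ℝ) (φ := fun _ : ι => ℝ) i)).subset
      (fun x (hx : x ∈ univ.pi s) => hx i trivial) hs

theorem hasDerivAt_log_one_add_mul (a : ℝ) {x : ℝ} (hx : 1 + a * x ≠ 0) :
    HasDerivAt (fun x => log (1 + a * x)) (a / (1 + a * x)) x := by
  simpa using (((hasDerivAt_id x).const_mul a).const_add 1).log hx

theorem hasDerivAt_div_one_add_mul (a : ℝ) {x : ℝ} (hx : 1 + a * x ≠ 0) :
    HasDerivAt (fun x => a / (1 + a * x)) (-(a / (1 + a * x)) ^ 2) x := by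
  have hlin : HasDerivAt (fun x => 1 + a * x) a x := by
    simpa using ((hasDerivAt_id x).const_mul a).const_add 1
  refine ((hasDerivAt_const x a).fun_div hlin hx).congr_deriv ?_
  field_simp
  ring

theorem div_one_add_mul_le_div_one_add_mul {a b x : ℝ} (hb : 0 ≤ b) (hba : b ≤ a) (hx : 0 ≤ x) :
    b / (1 + b * x) ≤ a / (1 + a * x) := by
  rw [div_le_div_iff₀ (by positivity) (by nlinarith)]
  linarith

theorem concaveOn_log_one_add_mul_sub_log_one_add_mul {a b : ℝ} (hb : 0 ≤ b) (hba : b ≤ a) :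
    ConcaveOn ℝ (Ici 0) fun x => log (1 + a * x) - log (1 + b * x) := by
  have ha : 0 ≤ a := hb.trans hba
  have hpos : ∀ {c x : ℝ}, 0 ≤ c → 0 ≤ x → 0 < 1 + c * x := fun hc hx => by positivity
  refine concaveOn_of_hasDerivWithinAt2_nonpos (convex_Ici 0)
    (f' := fun x => a / (1 + a * x) - b / (1 + b * x))
    (f'' := fun x => -(a / (1 + a * x)) ^ 2 + (b / (1 + b * x)) ^ 2) ?_ ?_ ?_ ?_
  · exact .sub (.log (by fun_prop) fun x hx => (hpos ha hx).ne')
      (.log (by fun_prop) fun x hx => (hpos hb hx).ne')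
  all_goals rw [interior_Ici]; intro x (hx : 0 < x)
  · exact ((hasDerivAt_log_one_add_mul a (hpos ha hx.le).ne').fun_sub
      (hasDerivAt_log_one_add_mul b (hpos hb hx.le).ne')).hasDerivWithinAt
  · exact ((hasDerivAt_div_one_add_mul a (hpos ha hx.le).ne').fun_sub
      (hasDerivAt_div_one_add_mul b (hpos hb hx.le).ne')).hasDerivWithinAt.congr_deriv (by ring)
  · have := pow_le_pow_left₀ (div_nonneg hb (hpos hb hx.le).le)
      (div_one_add_mul_le_div_one_add_mul hb hba hx.le) 2
    linarith

theorem multicarrier_secrecy_concave_general (N : ℕ)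
    (g h : Fin N → ℝ) (hg : ∀ r, 0 ≤ g r) (hh : ∀ r, 0 ≤ h r) :
    ConcaveOn ℝ {ρ : Fin N → ℝ | ∀ r, 0 ≤ ρ r}
      (fun ρ => ∑ r, (Real.log (1 + g r * ρ r)
                      - Real.log (1 + min (g r) (h r) * ρ r))) := by
  have hsum := concaveOn_univ_pi_sum fun r =>
    concaveOn_log_one_add_mul_sub_log_one_add_mul (le_min (hg r) (hh r)) (min_le_left _ _)
  rwa [pi_univ_Ici] at hsum

/-- For `N ≥ 1` and nonnegative channel gain vectors `g, h`, the
multi-carrier variable-rate secrecy objective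
`ρ ↦ Σ_r ( log(1+g_r·ρ_r) − log(1+min(g_r,h_r)·ρ_r) )` is concave on the
nonnegative orthant of `ℝ^N`. -/
theorem multicarrier_secrecy_concave (N : ℕ) (hN : 1 ≤ N)
    (g h : Fin N → ℝ) (hg : ∀ r, 0 ≤ g r) (hh : ∀ r, 0 ≤ h r) :
    ConcaveOn ℝ {ρ : Fin N → ℝ | ∀ r, 0 ≤ ρ r}
      (fun ρ => ∑ r, (Real.log (1 + g r * ρ r)
                      - Real.log (1 + min (g r) (h r) * ρ r))) :=
  multicarrier_secrecy_concave_general N g h hg hh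
end

section
/- Let N ≥ 1, let g = (g₁,…,g_N) and h = (h₁,…,h_N) be vectors of nonnegative reals, and suppose there exists an index s with g_s > h_s. Then for every total power x ≥ 0 and every feasible allocation ρ (i.e., ρ_r ≥ 0 for all r and Σ_r ρ_r = x), there exists a feasible allocation ρ' with ρ'_r = 0 for every index r with g_r ≤ h_r such that c(ρ', g, h) ≥ c(ρ, g, h). Consequently, the optimal power splitting puts zero power on every sub-carrier where the eavesdropper's gain is at least the legitimate gain. -/
/-- Instantaneous multi-carrier secrecy rate with variable rate coding,
`c(ρ, g, h) = Σ_r ( log(1+g_r ρ_r) − log(1+min(g_r,h_r) ρ_r) )`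
(eqs. (9)–(10) of the paper; natural logarithms). -/
noncomputable def secrecyRate {N : ℕ} (ρ g h : Fin N → ℝ) : ℝ :=
  ∑ r, (Real.log (1 + g r * ρ r) - Real.log (1 + min (g r) (h r) * ρ r))

private lemma term_mono (a b t t' : ℝ) (hb : 0 ≤ b) (hab : b < a)
    (ht : 0 ≤ t) (htt : t ≤ t') :
    Real.log (1 + a * t) - Real.log (1 + b * t) ≤
      Real.log (1 + a * t') - Real.log (1 + b * t') := by
  have ha : 0 < a := lt_of_le_of_lt hb hab
  have ht' : 0 ≤ t' := le_trans ht htt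
  have p1 : (0:ℝ) < 1 + a * t := by nlinarith
  have p2 : (0:ℝ) < 1 + b * t := by nlinarith
  have p3 : (0:ℝ) < 1 + a * t' := by nlinarith
  have p4 : (0:ℝ) < 1 + b * t' := by nlinarith
  have key : (1 + a * t) * (1 + b * t') ≤ (1 + a * t') * (1 + b * t) := by
    nlinarith [mul_nonneg (le_of_lt (sub_pos.mpr hab)) (sub_nonneg.mpr htt)]
  have := Real.log_le_log (by positivity) key
  rw [Real.log_mul (ne_of_gt p1) (ne_of_gt p4),
      Real.log_mul (ne_of_gt p3) (ne_of_gt p2)] at this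
  linarith

/-- If some sub-carrier `s` has `g_s > h_s`, then for every total
power `x ≥ 0` and every feasible allocation `ρ` there is a feasible allocation
`ρ'` putting zero power on every sub-carrier with `g_r ≤ h_r` and achieving at
least the same secrecy rate. -/
theorem optimal_splitting_zero_on_bad_subcarriers (N : ℕ) (hN : 1 ≤ N)
    (g h : Fin N → ℝ) (hg : ∀ r, 0 ≤ g r) (hh : ∀ r, 0 ≤ h r)
    (s : Fin N) (hs : h s < g s)
    (x : ℝ) (hx : 0 ≤ x)
    (ρ : Fin N → ℝ) (hρ : ∀ r, 0 ≤ ρ r) (hsum : ∑ r, ρ r = x) :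
    ∃ ρ' : Fin N → ℝ, (∀ r, 0 ≤ ρ' r) ∧ (∑ r, ρ' r = x) ∧
      (∀ r, g r ≤ h r → ρ' r = 0) ∧
      secrecyRate ρ g h ≤ secrecyRate ρ' g h := by
  classical
  set B : ℝ := ∑ r, if g r ≤ h r then ρ r else 0 with hB
  have hBnn : 0 ≤ B := Finset.sum_nonneg (fun r _ => by split <;> simp [hρ r])
  refine ⟨fun r => (if g r ≤ h r then 0 else ρ r) + (if r = s then B else 0),
    ?_, ?_, ?_, ?_⟩
  · intro r
    have := hρ r
    dsimp only
    split <;> split <;> simp_all <;> linarith [hρ s, hBnn]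
  · rw [Finset.sum_add_distrib]
    have h1 : (∑ r, if r = s then B else 0) = B := by simp
    have h2 : (∑ r, ((if g r ≤ h r then 0 else ρ r))) + B = ∑ r, ρ r := by
      rw [hB, ← Finset.sum_add_distrib]
      congr 1; ext r; split <;> ring
    rw [h1]; linarith [hsum]
  · intro r hr
    have hrs : r ≠ s := by
      intro he; rw [he] at hr; exact absurd hr (not_le.mpr hs)
    simp [hr, hrs]
  · unfold secrecyRate
    apply Finset.sum_le_sum
    intro r _
    by_cases hb : g r ≤ h r
    · have hm : min (g r) (h r) = g r := min_eq_left hb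
      have hrs : r ≠ s := by
        intro he; rw [he] at hb; exact absurd hb (not_le.mpr hs)
      simp [hm, hb, hrs]
    · push_neg at hb
      have hm : min (g r) (h r) = h r := min_eq_right (le_of_lt hb)
      by_cases hrs : r = s
      · subst hrs
        rw [hm]
        simp only [if_pos rfl, if_neg (not_le.mpr hb)]
        exact term_mono (g r) (h r) (ρ r) (ρ r + B) (hh r) hb (hρ r)
          (by linarith)
      · simp [hm, not_le.mpr hb, hrs]
end

section
/- Let m ≥ 1 be an integer and let ḡ, h̄ be positive reals with ḡ ≤ h̄. Then for every ρ ≥ 0: ∫₀^∞ log(1+gρ) f(g; m, ḡ) dg ≤ ∫₀^∞ log(1+hρ) f(h; m, h̄) dh, where f(·; m, μ) is the Gamma pdf with shape m and mean μ. Consequently, with only statistical channel knowledge and a fixed transmit power, the expected secrecy rate ∫∫ (log(1+gρ) − log(1+hρ)) f(g; m, ḡ) f(h; m, h̄) dg dh is ≤ 0: no positive secrecy rate is achievable when the legitimate channel is statistically no better than the eavesdropper's. -/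
/-!
A gamma law of mean `c * μ` is the image of the gamma law of mean `μ` (same shape) under
`x ↦ c * x`. With `c = ḡ / h̄ ≤ 1` and `x ↦ log (1 + x * ρ)` nondecreasing, the ergodic rate of
the legitimate channel is therefore at most that of the eavesdropper. Both densities have mass
one, so the double integral splits into the difference of these two rates.
-/

open MeasureTheory

/-- Gamma pdf with integer shape `m` and mean `μ` (eq. (29) of the paper). -/
noncomputable def gammaPdf (m : ℕ) (μ : ℝ) (x : ℝ) : ℝ :=
  ((m : ℝ) / μ) ^ m * x ^ (m - 1) * Real.exp (-((m : ℝ) / μ) * x) / Real.Gamma m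

open Real Set

lemma integrableOn_pow_mul_exp_neg_mul (n : ℕ) {b : ℝ} (hb : 0 < b) :
    IntegrableOn (fun x : ℝ => x ^ n * exp (-b * x)) (Ioi 0) := by
  have h := integrableOn_rpow_mul_exp_neg_mul_rpow (s := n) (p := 1)
    (by linarith [n.cast_nonneg (α := ℝ)]) one_pos hb
  simpa only [Real.rpow_natCast, Real.rpow_one] using h

lemma gammaPdf_nonneg (m : ℕ) {μ x : ℝ} (hμ : 0 ≤ μ) (hx : 0 ≤ x) : 0 ≤ gammaPdf m μ x := by
  have : 0 ≤ Real.Gamma m := Real.Gamma_nonneg_of_nonneg m.cast_nonneg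
  unfold gammaPdf
  positivity

lemma pow_mul_gammaPdf (n m : ℕ) (μ x : ℝ) :
    x ^ n * gammaPdf m μ x
      = (m / μ) ^ m / Real.Gamma m * (x ^ (n + (m - 1)) * exp (-(m / μ) * x)) := by
  unfold gammaPdf
  ring

lemma integrableOn_pow_mul_gammaPdf (n m : ℕ) (hm : 1 ≤ m) {μ : ℝ} (hμ : 0 < μ) :
    IntegrableOn (fun x => x ^ n * gammaPdf m μ x) (Ioi 0) := by
  have hb : 0 < (m : ℝ) / μ := div_pos (by exact_mod_cast hm) hμ
  simp only [pow_mul_gammaPdf n m]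
  exact (integrableOn_pow_mul_exp_neg_mul (n + (m - 1)) hb).const_mul _

lemma integral_gammaPdf (m : ℕ) (hm : 1 ≤ m) {μ : ℝ} (hμ : 0 < μ) :
    ∫ x in Ioi 0, gammaPdf m μ x = 1 := by
  have hm₀ : (0 : ℝ) < m := by exact_mod_cast hm
  have hb : 0 < (m : ℝ) / μ := div_pos hm₀ hμ
  have hΓ := Real.integral_rpow_mul_exp_neg_mul_Ioi hm₀ hb
  have hpow : ∀ x : ℝ, x ^ ((m : ℝ) - 1) = x ^ (m - 1) := fun x => by
    rw [← Nat.cast_one, ← Nat.cast_sub hm, Real.rpow_natCast]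
  simp only [hpow, ← neg_mul] at hΓ
  calc ∫ x in Ioi 0, gammaPdf m μ x
      = (m / μ) ^ m / Real.Gamma m * ∫ x in Ioi 0, x ^ (m - 1) * exp (-(m / μ) * x) := by
        rw [← integral_const_mul]
        simp only [gammaPdf]
        congr with x
        ring
    _ = 1 := by
        have : Real.Gamma m ≠ 0 := (Real.Gamma_pos_of_pos hm₀).ne'
        rw [hΓ, Real.rpow_natCast, one_div, inv_pow]
        field_simp

lemma gammaPdf_mul_mul (m : ℕ) {c : ℝ} (hc : c ≠ 0) (μ x : ℝ) :
    c * gammaPdf m (c * μ) (c * x) = gammaPdf m μ x := by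
  rcases m with _ | k
  · simp [gammaPdf]
  simp only [gammaPdf, Nat.add_sub_cancel, div_mul_eq_div_div, div_pow, mul_pow]
  field_simp
  ring

lemma setIntegral_mul_gammaPdf_mul (φ : ℝ → ℝ) (m : ℕ) {c : ℝ} (hc : 0 < c) (μ : ℝ) :
    ∫ x in Ioi 0, φ x * gammaPdf m (c * μ) x = ∫ x in Ioi 0, φ (c * x) * gammaPdf m μ x := by
  have hsubst := integral_comp_mul_left_Ioi' (fun x => φ x * gammaPdf m (c * μ) x) 0 hc
  rw [mul_zero] at hsubst
  rw [← hsubst, smul_eq_mul, ← integral_const_mul]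
  congr with x
  rw [← gammaPdf_mul_mul m hc.ne' μ x]
  ring

lemma setIntegral_mul_gammaPdf_mono {φ : ℝ → ℝ} (hφ₀ : ∀ x ∈ Ioi 0, 0 ≤ φ x)
    (hφ : MonotoneOn φ (Ioi 0)) (m : ℕ) {μ ν : ℝ} (hμ : 0 < μ) (hμν : μ ≤ ν)
    (hint : IntegrableOn (fun x => φ x * gammaPdf m ν x) (Ioi 0)) :
    ∫ x in Ioi 0, φ x * gammaPdf m μ x ≤ ∫ x in Ioi 0, φ x * gammaPdf m ν x := by
  have hν : 0 < ν := hμ.trans_le hμν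
  obtain ⟨c, hc₀, hc₁, rfl⟩ : ∃ c, 0 < c ∧ c ≤ 1 ∧ μ = c * ν :=
    ⟨μ / ν, div_pos hμ hν, (div_le_one hν).2 hμν, (div_mul_cancel₀ μ hν.ne').symm⟩
  rw [setIntegral_mul_gammaPdf_mul φ m hc₀ ν]
  refine integral_mono_of_nonneg ?_ hint ?_ <;>
    filter_upwards [ae_restrict_mem measurableSet_Ioi] with x (hx : 0 < x)
  · exact mul_nonneg (hφ₀ _ (mul_pos hc₀ hx)) (gammaPdf_nonneg m hν.le hx.le)
  · have hcx : c * x ≤ x := mul_le_of_le_one_left hx.le hc₁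
    exact mul_le_mul_of_nonneg_right (hφ (mul_pos hc₀ hx) hx hcx) (gammaPdf_nonneg m hν.le hx.le)

lemma monotoneOn_log_one_add_mul {ρ : ℝ} (hρ : 0 ≤ ρ) :
    MonotoneOn (fun x => log (1 + x * ρ)) (Ioi 0) := fun x (hx : 0 < x) _ _ hxy =>
  log_le_log (by positivity) (by gcongr)

lemma integrableOn_log_one_add_mul_mul_gammaPdf (m : ℕ) (hm : 1 ≤ m) {μ ρ : ℝ} (hμ : 0 < μ)
    (hρ : 0 ≤ ρ) :
    IntegrableOn (fun x => log (1 + x * ρ) * gammaPdf m μ x) (Ioi 0) := by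
  refine ((integrableOn_pow_mul_gammaPdf 1 m hm hμ).const_mul ρ).mono' (by
    unfold gammaPdf; fun_prop) ?_
  filter_upwards [ae_restrict_mem measurableSet_Ioi] with x (hx : 0 < x)
  have hxρ : 0 ≤ x * ρ := mul_nonneg hx.le hρ
  have hlog : log (1 + x * ρ) ≤ x * ρ := by
    linarith [log_le_sub_one_of_pos (by positivity : 0 < 1 + x * ρ)]
  rw [norm_mul, norm_of_nonneg (log_nonneg (by linarith)),
    norm_of_nonneg (gammaPdf_nonneg m hμ.le hx.le), pow_one, ← mul_assoc, mul_comm ρ]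
  exact mul_le_mul_of_nonneg_right hlog (gammaPdf_nonneg m hμ.le hx.le)

lemma integral_integral_sub_mul_mul {α β : Type*} [MeasurableSpace α] [MeasurableSpace β]
    {μ : Measure α} {ν : Measure β} {a p : α → ℝ} {b q : β → ℝ}
    (hp : ∫ x, p x ∂μ = 1) (hq : ∫ y, q y ∂ν = 1)
    (hap : Integrable (fun x => a x * p x) μ) (hbq : Integrable (fun y => b y * q y) ν) :
    ∫ x, ∫ y, (a x - b y) * p x * q y ∂ν ∂μ = ∫ x, a x * p x ∂μ - ∫ y, b y * q y ∂ν := by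
  have hpi : Integrable p μ := .of_integral_ne_zero (by simp [hp])
  have hqi : Integrable q ν := .of_integral_ne_zero (by simp [hq])
  have inner : ∀ x, ∫ y, (a x - b y) * p x * q y ∂ν = a x * p x - (∫ y, b y * q y ∂ν) * p x := by
    intro x
    calc ∫ y, (a x - b y) * p x * q y ∂ν = ∫ y, a x * p x * q y - p x * (b y * q y) ∂ν := by
          congr with y
          ring
      _ = _ := by
          rw [integral_sub (hqi.const_mul _) (hbq.const_mul _), integral_const_mul,
            integral_const_mul, hq]
          ring
  simp only [inner]
  rw [integral_sub hap (hpi.const_mul _), integral_const_mul, hp, mul_one]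

/-- For integer `m ≥ 1` and means `0 < ḡ ≤ h̄`, for every `ρ ≥ 0`,
`∫₀^∞ log(1+gρ) f(g; m, ḡ) dg ≤ ∫₀^∞ log(1+hρ) f(h; m, h̄) dh`, and consequently
the expected secrecy rate with only statistical channel knowledge
`∫₀^∞ ∫₀^∞ (log(1+gρ) − log(1+hρ)) f(g; m, ḡ) f(h; m, h̄) dh dg ≤ 0`. -/
theorem no_secrecy_with_statistical_CSI (m : ℕ) (hm : 1 ≤ m)
    (gbar hbar : ℝ) (hgbar : 0 < gbar) (hhbar : 0 < hbar) (hle : gbar ≤ hbar)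
    (ρ : ℝ) (hρ : 0 ≤ ρ) :
    (∫ g in Set.Ioi (0 : ℝ), Real.log (1 + g * ρ) * gammaPdf m gbar g)
      ≤ (∫ h in Set.Ioi (0 : ℝ), Real.log (1 + h * ρ) * gammaPdf m hbar h)
    ∧ (∫ g in Set.Ioi (0 : ℝ), ∫ h in Set.Ioi (0 : ℝ),
        (Real.log (1 + g * ρ) - Real.log (1 + h * ρ))
          * gammaPdf m gbar g * gammaPdf m hbar h) ≤ 0 := by
  have hmono := setIntegral_mul_gammaPdf_mono
    (fun x (hx : 0 < x) => log_nonneg (le_add_of_nonneg_right (mul_nonneg hx.le hρ)))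
    (monotoneOn_log_one_add_mul hρ) m hgbar hle
    (integrableOn_log_one_add_mul_mul_gammaPdf m hm hhbar hρ)
  refine ⟨hmono, ?_⟩
  rw [integral_integral_sub_mul_mul (integral_gammaPdf m hm hgbar) (integral_gammaPdf m hm hhbar)
    (integrableOn_log_one_add_mul_mul_gammaPdf m hm hgbar hρ)
    (integrableOn_log_one_add_mul_mul_gammaPdf m hm hhbar hρ)]
  exact sub_nonpos.2 hmono
end
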